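/- arXiv:1103.1057 — 2 statements merged into one kernel-verified Lean document; each statement's English description precedes it below -/
import Mathlib

section
/- Let H = (V, E) be a hypergraph with Bip H connected, let the spanning tree Γ of Bip H induce the hypertree f : E → ℕ, and let E' ⊆ E be non-empty. Then Σ_{e∈E'} f(e) = |∪E'| − c(E') holds if and only if Γ ∩ Bip H|_{E'} is a spanning forest of Bip H|_{E'}. Moreover, given such Γ and E', if Γ ∩ Bip H|_{E'} is removed from Γ and replaced by any other spanning forest F of Bip H|_{E'}, the result is again a spanning tree of Bip H, and the hypertree it realizes agrees with f on E ∖ E'. -/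
open SimpleGraph Finset
open scoped Classical

noncomputable section

variable {α β : Type} [DecidableEq α] [DecidableEq β]

/-- A hypergraph: a finite set `V` of vertices, a finite (index) set `E` of hyperedges,
where the hyperedge indexed by `e ∈ E` is the nonempty set `incid e ⊆ V` of its vertices.
(Indexing hyperedges by a type allows multiset multiplicities, as in the paper.) -/
structure Hypergraph' (α β : Type) where
  V : Finset α
  E : Finset β
  incid : β → Finset α
  incid_sub : ∀ e ∈ E, incid e ⊆ V
  incid_nonempty : ∀ e ∈ E, (incid e).Nonempty

/-- The degree (valence) of a vertex in a graph. -/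
def degr {W : Type} (T : SimpleGraph W) (x : W) : ℕ := (T.neighborSet x).ncard

/-- Nullity (first Betti number) of a graph: #edges − #vertices + #components. -/
def nullity {W : Type} (G : SimpleGraph W) : ℕ :=
  G.edgeSet.ncard + Nat.card G.ConnectedComponent - Nat.card W

/-- The result of transferring one unit of valence from `a` to `b`. -/
def transferFun (f : β → ℕ) (a b : β) : β → ℕ :=
  fun x => if x = a then f a - 1 else if x = b then f b + 1 else f x

namespace Hypergraph'

variable (H : Hypergraph' α β)

/-- The bipartite graph associated to a hypergraph: color classes `V` and `E`,
with `v` joined to `e` iff `v ∈ incid e`. -/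
def Bip : SimpleGraph (↥H.V ⊕ ↥H.E) :=
  SimpleGraph.fromRel (fun x y =>
    ∃ (v : ↥H.V) (e : ↥H.E), x = Sum.inl v ∧ y = Sum.inr e ∧ (v : α) ∈ H.incid (e : β))

/-- A spanning tree of the associated bipartite graph. -/
def IsSpanningTree (T : SimpleGraph (↥H.V ⊕ ↥H.E)) : Prop :=
  T ≤ H.Bip ∧ T.IsTree

/-- `T` is a spanning tree of `Bip H` realizing the vector `f` (a function on the
hyperedges, encoded as a function on `β` vanishing off `E`): `T` has degree
`f e + 1` at each hyperedge `e`. -/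
def Realizes (T : SimpleGraph (↥H.V ⊕ ↥H.E)) (f : β → ℕ) : Prop :=
  H.IsSpanningTree T ∧ (∀ e, e ∉ H.E → f e = 0) ∧
    ∀ e : ↥H.E, degr T (Sum.inr e) = f (e : β) + 1

/-- A hypertree is a vector realized by some spanning tree of `Bip H`. -/
def IsHypertree (f : β → ℕ) : Prop := ∃ T, H.Realizes T f

/-- The bipartite graph `Bip H |_{E'}` induced by a subset `E'` of hyperedges:
color classes `∪E'` and `E'`. -/
def BipOn (E' : Finset β) : SimpleGraph (↥(E'.biUnion H.incid) ⊕ ↥E') :=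
  SimpleGraph.fromRel (fun x y =>
    ∃ (v : ↥(E'.biUnion H.incid)) (e : ↥E'),
      x = Sum.inl v ∧ y = Sum.inr e ∧ (v : α) ∈ H.incid (e : β))

/-- `c(E')`: the number of connected components of `Bip H |_{E'}`. -/
def compCount (E' : Finset β) : ℕ := Nat.card (H.BipOn E').ConnectedComponent

/-- `μ(E') = |∪E'| − c(E')` (and `μ(∅) = 0`). -/
def mu (E' : Finset β) : ℤ :=
  ((E'.biUnion H.incid).card : ℤ) - (H.compCount E' : ℤ)

/-- `f` is such that a transfer of valence is possible from `a` to `b`. -/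
def TransferPossible (f : β → ℕ) (a b : β) : Prop :=
  0 < f a ∧ H.IsHypertree (transferFun f a b)

/-- `e` is internally active w.r.t. the hypertree `f` and the order `o`. -/
def InternallyActive (o : LinearOrder β) (f : β → ℕ) (e : β) : Prop :=
  ∀ x ∈ H.E, o.lt x e → ¬ H.TransferPossible f e x

/-- `e` is externally active w.r.t. the hypertree `f` and the order `o`. -/
def ExternallyActive (o : LinearOrder β) (f : β → ℕ) (e : β) : Prop :=
  ∀ x ∈ H.E, o.lt x e → ¬ H.TransferPossible f x e

/-- `ῑ(f)`: the number of internally inactive hyperedges w.r.t. `f`. -/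
def intInact (o : LinearOrder β) (f : β → ℕ) : ℕ :=
  (H.E.filter (fun e => ¬ H.InternallyActive o f e)).card

/-- `ε̄(f)`: the number of externally inactive hyperedges w.r.t. `f`. -/
def extInact (o : LinearOrder β) (f : β → ℕ) : ℕ :=
  (H.E.filter (fun e => ¬ H.ExternallyActive o f e)).card

end Hypergraph'

/-- The subgraph of `Bip H` consisting of the edges incident with hyperedges in `E'`
(this is `Bip H |_{E'}` viewed inside the big vertex set). -/
def Hypergraph'.bigRestrict (H : Hypergraph' α β) (E' : Finset β) :
    SimpleGraph (↥H.V ⊕ ↥H.E) :=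
  SimpleGraph.fromRel (fun x y =>
    ∃ (v : ↥H.V) (e : ↥H.E), x = Sum.inl v ∧ y = Sum.inr e ∧
      (e : β) ∈ E' ∧ (v : α) ∈ H.incid (e : β))

/-- `F` is a spanning forest (maximal cycle-free subgraph) of `G`: it is an acyclic
subgraph preserving reachability. -/
def IsSpanningForest {W : Type} (G F : SimpleGraph W) : Prop :=
  F ≤ G ∧ F.IsAcyclic ∧ ∀ x y : W, G.Reachable x y → F.Reachable x y


/-!
An acyclic subgraph of a finite graph has exactly (#vertices − #components) edges, and an acyclic
`F ≤ G` is a spanning forest of `G` iff it has as many components as `G`. The graph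
`Γ ⊓ bigRestrict E'` is acyclic with `∑_{e ∈ E'} (f e + 1)` edges (each edge of `Bip H` has exactly
one hyperedge end), while `bigRestrict E'` is a copy of `Bip H |_{E'}` plus isolated vertices, so it
has `c(E') + (|V| − |∪E'|) + (|E| − |E'|)` components; comparing the two counts gives the
equivalence. Two spanning forests of the same graph have the same number of edges, so exchanging
`Γ ⊓ bigRestrict E'` for `F` keeps `|V| + |E| − 1` edges, and keeps connectivity because `F`
reconnects the ends of every edge it replaces: the result is a spanning tree, whose degrees at
hyperedges outside `E'` are those of `Γ`.
-/

namespace SimpleGraph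

section Components

variable {V : Type*} {G G' : SimpleGraph V}

theorem Reachable.of_forall_adj (hadj : ∀ u v, G.Adj u v → G'.Reachable u v) {x y : V}
    (h : G.Reachable x y) : G'.Reachable x y := by
  rw [reachable_iff_reflTransGen] at h ⊢
  exact Relation.ReflTransGen.lift' id
    (fun u v huv => (reachable_iff_reflTransGen u v).mp (hadj u v huv)) _ _ h

theorem Reachable.deleteEdges_singleton_or {a b x y : V} (h : G.Reachable x y) :
    (G.deleteEdges {s(a, b)}).Reachable x y ∨
      ((G.deleteEdges {s(a, b)}).Reachable x a ∧ (G.deleteEdges {s(a, b)}).Reachable b y) ∨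
      ((G.deleteEdges {s(a, b)}).Reachable x b ∧ (G.deleteEdges {s(a, b)}).Reachable a y) := by
  obtain ⟨p⟩ := h
  induction p with
  | nil => exact .inl .rfl
  | @cons u v z huv _ ih =>
    by_cases he : s(u, v) = s(a, b)
    · rcases Sym2.eq_iff.mp he with ⟨rfl, rfl⟩ | ⟨rfl, rfl⟩
      · rcases ih with h | ⟨-, h⟩ | ⟨-, h⟩
        exacts [.inr (.inl ⟨.rfl, h⟩), .inr (.inl ⟨.rfl, h⟩), .inl h]
      · rcases ih with h | ⟨-, h⟩ | ⟨-, h⟩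
        exacts [.inr (.inr ⟨.rfl, h⟩), .inl h, .inr (.inr ⟨.rfl, h⟩)]
    · have huv' : (G.deleteEdges {s(a, b)}).Reachable u v :=
        (deleteEdges_adj.mpr ⟨huv, he⟩).reachable
      rcases ih with h | ⟨h, h'⟩ | ⟨h, h'⟩
      exacts [.inl (huv'.trans h), .inr (.inl ⟨huv'.trans h, h'⟩),
        .inr (.inr ⟨huv'.trans h, h'⟩)]

theorem card_connectedComponent_deleteEdges_of_isBridge [Finite V] {a b : V} (hab : G.Adj a b)
    (hbr : G.IsBridge s(a, b)) :
    Nat.card (G.deleteEdges {s(a, b)}).ConnectedComponent = Nat.card G.ConnectedComponent + 1 := by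
  rw [isBridge_iff] at hbr
  -- The component of `b` is the new one; all others correspond to components of `G`.
  let φ (c : (G.deleteEdges {s(a, b)}).ConnectedComponent) : Option G.ConnectedComponent :=
    if c = connectedComponentMk _ b then none else some (c.map (Hom.ofLE (deleteEdges_le _)))
  have hφ : Function.Bijective φ := by
    refine ⟨fun c d hcd => ?_, fun o => ?_⟩
    · induction c using ConnectedComponent.ind with | _ x =>
      induction d using ConnectedComponent.ind with | _ y =>
      simp only [φ, ConnectedComponent.eq] at hcd ⊢
      split_ifs at hcd with hx hy hy
      · exact hx.trans hy.symm
      simp only [Option.some.injEq, ConnectedComponent.map_mk, ConnectedComponent.eq] at hcd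
      rcases hcd.deleteEdges_singleton_or (a := a) (b := b) with h | ⟨-, h⟩ | ⟨h, -⟩
      · exact h
      · exact absurd h.symm hy
      · exact absurd h hx
    · rcases o with _ | c
      · exact ⟨connectedComponentMk _ b, if_pos rfl⟩
      induction c using ConnectedComponent.ind with | _ x =>
      by_cases hxb : (G.deleteEdges {s(a, b)}).Reachable x b
      · refine ⟨connectedComponentMk _ a, ?_⟩
        simp only [φ, ConnectedComponent.eq, if_neg hbr, ConnectedComponent.map_mk,
          Option.some.injEq]
        exact hab.reachable.trans (hxb.mono (deleteEdges_le _)).symm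
      · exact ⟨connectedComponentMk _ x, by simp [φ, hxb]⟩
  rw [Nat.card_eq_of_bijective φ hφ, Finite.card_option]

theorem card_connectedComponent_bot [Finite V] :
    Nat.card (⊥ : SimpleGraph V).ConnectedComponent = Nat.card V :=
  (Nat.card_eq_of_bijective _ ⟨fun _ _ h => reachable_bot.mp (ConnectedComponent.exact h),
    ConnectedComponent.ind fun v => ⟨v, rfl⟩⟩).symm

theorem IsAcyclic.card_connectedComponent_add_card_edgeSet [Finite V] (hG : G.IsAcyclic) :
    Nat.card G.ConnectedComponent + Nat.card G.edgeSet = Nat.card V := by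
  induction hn : Nat.card G.edgeSet generalizing G with
  | zero =>
    obtain rfl : G = ⊥ :=
      edgeSet_eq_empty.mp (Set.isEmpty_coe_sort.mp (Finite.card_eq_zero_iff.mp hn))
    simpa using card_connectedComponent_bot
  | succ n ih =>
    obtain ⟨e, he⟩ : G.edgeSet.Nonempty :=
      Set.nonempty_of_ncard_ne_zero (by rw [← Nat.card_coe_set_eq, hn]; omega)
    induction e using Sym2.ind with | _ a b =>
    have hdel := ih (hG.anti (deleteEdges_le {s(a, b)})) (by
      rw [Nat.card_coe_set_eq, edgeSet_deleteEdges, Set.ncard_sdiff_singleton_of_mem he,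
        ← Nat.card_coe_set_eq, hn]; rfl)
    rw [card_connectedComponent_deleteEdges_of_isBridge he
      (isAcyclic_iff_forall_isBridge.mp hG he)] at hdel
    omega

theorem card_connectedComponent_eq_iff_forall_reachable [Finite V] (h : G' ≤ G) :
    Nat.card G'.ConnectedComponent = Nat.card G.ConnectedComponent ↔
      ∀ x y, G.Reachable x y → G'.Reachable x y := by
  have hsurj := ConnectedComponent.surjective_map_ofLE h
  rw [(and_iff_right hsurj).symm.trans (Nat.bijective_iff_surjective_and_card _).symm,
    Function.Bijective, and_iff_left hsurj]
  refine ⟨fun hinj x y hxy => ConnectedComponent.exact (hinj (ConnectedComponent.sound hxy)),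
    fun hreach => ConnectedComponent.ind₂ fun x y hxy => ConnectedComponent.sound ?_⟩
  exact hreach x y (ConnectedComponent.exact hxy)

end Components

section Embedding

variable {U W : Type*} {G' : SimpleGraph U} {G : SimpleGraph W}

theorem Reachable.eq_of_forall_not_adj {x y : W} (hx : ∀ z, ¬G.Adj x z) (h : G.Reachable x y) :
    x = y := by
  obtain ⟨_ | ⟨hadj, _⟩⟩ := h
  exacts [rfl, absurd hadj (hx _)]

theorem Embedding.exists_reachable_of_reachable (ι : G' ↪g G)
    (hiso : ∀ x ∉ Set.range ι, ∀ y, ¬G.Adj x y) {a : U} {y : W} (h : G.Reachable (ι a) y) :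
    ∃ b, ι b = y ∧ G'.Reachable a b := by
  obtain ⟨p⟩ := h
  generalize hu : ι a = u at p
  induction p generalizing a with
  | nil => exact ⟨a, hu, .rfl⟩
  | cons hadj _ ih =>
    subst hu
    obtain ⟨a', rfl⟩ : _ ∈ Set.range ι := by_contra fun h => hiso _ h _ hadj.symm
    obtain ⟨b, hb, hab⟩ := ih rfl
    exact ⟨b, hb, (ι.map_rel_iff.mp hadj).reachable.trans hab⟩

theorem card_connectedComponent_add_card_of_embedding [Finite W] (ι : G' ↪g G)
    (hiso : ∀ x ∉ Set.range ι, ∀ y, ¬G.Adj x y) :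
    Nat.card G.ConnectedComponent + Nat.card U =
      Nat.card G'.ConnectedComponent + Nat.card W := by
  have := Finite.of_injective _ ι.injective
  let Ψ : G'.ConnectedComponent ⊕ ↥(Set.range ι)ᶜ → G.ConnectedComponent :=
    Sum.elim (ConnectedComponent.map ι.toHom) (fun x => G.connectedComponentMk x)
  have hΨ : Function.Bijective Ψ := by
    refine ⟨?_, ConnectedComponent.ind fun x => ?_⟩
    · have lift {a : U} {y : W} (h : G.connectedComponentMk (ι a) = G.connectedComponentMk y) :=
        ι.exists_reachable_of_reachable hiso (ConnectedComponent.exact h)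
      rintro (c | ⟨x, hx⟩) (d | ⟨y, hy⟩) h
      · induction c using ConnectedComponent.ind with | _ a =>
        induction d using ConnectedComponent.ind with | _ b =>
        obtain ⟨b', hb', hab'⟩ := lift h
        rw [ι.injective hb'] at hab'
        exact congrArg Sum.inl (ConnectedComponent.sound hab')
      · induction c using ConnectedComponent.ind with | _ a =>
        obtain ⟨b, rfl, -⟩ := lift h
        exact absurd ⟨b, rfl⟩ hy
      · induction d using ConnectedComponent.ind with | _ b =>
        obtain ⟨a, rfl, -⟩ := lift h.symm
        exact absurd ⟨a, rfl⟩ hx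
      · exact congrArg Sum.inr
          (Subtype.ext ((ConnectedComponent.exact h).eq_of_forall_not_adj (hiso x hx)))
    · by_cases hx : x ∈ Set.range ι
      · obtain ⟨a, rfl⟩ := hx
        exact ⟨.inl (G'.connectedComponentMk a), rfl⟩
      · exact ⟨.inr ⟨x, hx⟩, rfl⟩
  rw [← Nat.card_eq_of_bijective Ψ hΨ, Nat.card_sum, Nat.card_coe_set_eq,
    ← Set.ncard_range_of_injective ι.injective, add_assoc, Set.ncard_compl_add_ncard]

end Embedding

theorem degr_eq_degree {W : Type} (G : SimpleGraph W) (x : W) [Fintype (G.neighborSet x)] :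
    degr G x = G.degree x := by
  rw [degr, ← Nat.card_coe_set_eq, Nat.card_eq_fintype_card, card_neighborSet_eq_degree]

theorem IsBipartiteWith.sum_degr_inr_eq_card_edgeSet {A B : Type} [Fintype A] [Fintype B]
    {G : SimpleGraph (A ⊕ B)} (h : G.IsBipartiteWith (Set.range Sum.inl) (Set.range Sum.inr)) :
    ∑ b : B, degr G (Sum.inr b) = Nat.card G.edgeSet := by
  have hsum := isBipartiteWith_sum_degrees_eq_card_edges' (G := G)
    (s := univ.map .inl) (t := univ.map .inr) (by simpa using h)
  rw [Finset.sum_map] at hsum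
  rw [Nat.card_eq_fintype_card, ← edgeFinset_card, ← hsum]
  exact Finset.sum_congr rfl fun b _ => degr_eq_degree G _

end SimpleGraph

section SpanningForest

variable {W : Type} [Finite W] {G F : SimpleGraph W}

theorem isSpanningForest_iff_card (hle : F ≤ G) (hF : F.IsAcyclic) :
    IsSpanningForest G F ↔ Nat.card F.edgeSet + Nat.card G.ConnectedComponent = Nat.card W := by
  rw [← hF.card_connectedComponent_add_card_edgeSet, add_comm, Nat.add_right_cancel_iff, eq_comm,
    card_connectedComponent_eq_iff_forall_reachable hle]
  simp [IsSpanningForest, hle, hF]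

theorem IsSpanningForest.card_edgeSet_add_card_connectedComponent (h : IsSpanningForest G F) :
    Nat.card F.edgeSet + Nat.card G.ConnectedComponent = Nat.card W :=
  (isSpanningForest_iff_card h.1 h.2.1).mp h

theorem SimpleGraph.IsTree.sdiff_sup_of_isSpanningForest {T R : SimpleGraph W} (hT : T.IsTree)
    (hTR : IsSpanningForest R (T ⊓ R)) (hF : IsSpanningForest R F) : (T \ R ⊔ F).IsTree := by
  rw [isTree_iff_connected_and_card] at hT ⊢
  obtain ⟨hconn, hcard⟩ := hT
  have := hconn.nonempty
  refine ⟨⟨fun x y => (hconn.preconnected x y).of_forall_adj fun u v huv => ?_⟩, ?_⟩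
  · by_cases hR : R.Adj u v
    · exact (hF.2.2 u v hR.reachable).mono le_sup_right
    · exact (show (T \ R).Adj u v from ⟨huv, hR⟩).reachable.mono le_sup_left
  · have hdisj : Disjoint (T \ R).edgeSet F.edgeSet := by
      rw [edgeSet_sdiff]
      exact Set.disjoint_sdiff_left.mono_right (edgeSet_mono hF.1)
    have hsame := hTR.card_edgeSet_add_card_connectedComponent.trans
      hF.card_edgeSet_add_card_connectedComponent.symm
    simp only [Nat.card_coe_set_eq, edgeSet_sup, edgeSet_sdiff, edgeSet_inf] at hdisj hsame hcard ⊢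
    rw [Set.ncard_union_eq hdisj, ← hcard,
      ← Set.ncard_inter_add_ncard_sdiff_eq_ncard T.edgeSet R.edgeSet]
    omega

end SpanningForest

namespace Hypergraph'

section

variable {α β : Type} (H : Hypergraph' α β) (E' : Finset β)

theorem isBipartiteWith_bip : H.Bip.IsBipartiteWith (Set.range Sum.inl) (Set.range Sum.inr) where
  disjoint := Set.isCompl_range_inl_range_inr.disjoint
  mem_of_adj := by rintro (v | e) (w | f) h <;> simp_all [Bip]

theorem bigRestrict_le_bip : H.bigRestrict E' ≤ H.Bip := by
  rintro (v | e) (w | f) h <;> simp_all [bigRestrict, Bip]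

theorem bigRestrict_adj_inr {e : ↥H.E} {x : ↥H.V ⊕ ↥H.E} :
    (H.bigRestrict E').Adj (Sum.inr e) x ↔ ↑e ∈ E' ∧ H.Bip.Adj (Sum.inr e) x := by
  cases x <;> simp [bigRestrict, Bip]

theorem bigRestrict_adj_inl_inr {v : ↥H.V} {e : ↥H.E} :
    (H.bigRestrict E').Adj (Sum.inl v) (Sum.inr e) ↔ ↑e ∈ E' ∧ ↑v ∈ H.incid ↑e := by
  simp [bigRestrict]

theorem card_edgeSet_eq_sum_degr {T : SimpleGraph (↥H.V ⊕ ↥H.E)} (hT : T ≤ H.Bip) :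
    Nat.card T.edgeSet = ∑ e : ↥H.E, degr T (Sum.inr e) :=
  (IsBipartiteWith.sum_degr_inr_eq_card_edgeSet
    ⟨H.isBipartiteWith_bip.disjoint, fun _ _ h => H.isBipartiteWith_bip.mem_of_adj (hT h)⟩).symm

theorem degr_inf_bigRestrict {Γ : SimpleGraph (↥H.V ⊕ ↥H.E)} (hΓ : Γ ≤ H.Bip) (e : ↥H.E) :
    degr (Γ ⊓ H.bigRestrict E') (Sum.inr e) = if ↑e ∈ E' then degr Γ (Sum.inr e) else 0 := by
  unfold degr
  split_ifs with he
  · congr 1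
    ext x
    simpa [H.bigRestrict_adj_inr, he] using @hΓ _ x
  · rw [Set.ncard_eq_zero]
    ext x
    simp [H.bigRestrict_adj_inr, he]

theorem degr_sdiff_bigRestrict_sup {Γ F : SimpleGraph (↥H.V ⊕ ↥H.E)} (hF : F ≤ H.bigRestrict E')
    {e : ↥H.E} (he : ↑e ∉ E') :
    degr (Γ \ H.bigRestrict E' ⊔ F) (Sum.inr e) = degr Γ (Sum.inr e) := by
  unfold degr
  congr 1
  ext x
  have hR : ¬(H.bigRestrict E').Adj (Sum.inr e) x := by simp [H.bigRestrict_adj_inr, he]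
  simpa [hR] using fun h => absurd (hF h) hR

def hypertreeOf (T : SimpleGraph (↥H.V ⊕ ↥H.E)) (b : β) : ℕ :=
  if hb : b ∈ H.E then degr T (Sum.inr ⟨b, hb⟩) - 1 else 0

theorem realizes_hypertreeOf {T : SimpleGraph (↥H.V ⊕ ↥H.E)} (hT : H.IsSpanningTree T) :
    H.Realizes T (H.hypertreeOf T) := by
  refine ⟨hT, fun e he => dif_neg he, fun e => ?_⟩
  obtain ⟨v, hv⟩ := H.incid_nonempty e e.2
  have hpos : 0 < degr T (Sum.inr e) := (Set.ncard_pos (Set.toFinite _)).mpr <|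
    (hT.2.connected.preconnected _ (Sum.inl ⟨v, H.incid_sub e e.2 hv⟩)).nonempty_neighborSet_left
      Sum.inr_ne_inl
  rw [hypertreeOf, dif_pos e.2, Subtype.coe_eta]
  omega

theorem card_edgeSet_inf_bigRestrict {Γ : SimpleGraph (↥H.V ⊕ ↥H.E)} {f : β → ℕ}
    (hΓ : H.Realizes Γ f) (hE' : E' ⊆ H.E) :
    Nat.card (Γ ⊓ H.bigRestrict E').edgeSet = ∑ e ∈ E', (f e + 1) := by
  rw [H.card_edgeSet_eq_sum_degr (inf_le_left.trans hΓ.1.1)]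
  simp_rw [H.degr_inf_bigRestrict E' hΓ.1.1, hΓ.2.2]
  rw [Finset.sum_coe_sort H.E (fun b => if b ∈ E' then f b + 1 else 0), Finset.sum_ite_mem,
    inter_eq_right.mpr hE']

end

section

variable {α β : Type} [DecidableEq α] (H : Hypergraph' α β) {E' : Finset β}

theorem bipOn_adj_inl_inr {v : ↥(E'.biUnion H.incid)} {e : ↥E'} :
    (H.BipOn E').Adj (Sum.inl v) (Sum.inr e) ↔ ↑v ∈ H.incid ↑e := by
  simp only [BipOn, fromRel_adj, ne_eq, reduceCtorEq, not_false_eq_true, Sum.inl.injEq,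
    Sum.inr.injEq, true_and]
  aesop

def bipOnEmbedding (hE' : E' ⊆ H.E) : H.BipOn E' ↪g H.bigRestrict E' where
  toFun := Sum.map (fun v => ⟨v, biUnion_subset.mpr (fun e he => H.incid_sub e (hE' he)) v.2⟩)
    (fun e => ⟨e, hE' e.2⟩)
  inj' := Sum.map_injective.mpr
    ⟨fun _ _ h => Subtype.ext (Subtype.mk.inj h), fun _ _ h => Subtype.ext (Subtype.mk.inj h)⟩
  map_rel_iff' := by
    rintro (v | e) (w | f)
    · simp [BipOn, bigRestrict]
    · simp [bipOn_adj_inl_inr, bigRestrict_adj_inl_inr, f.2]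
    · simp [adj_comm _ (Sum.inr _), bipOn_adj_inl_inr, bigRestrict_adj_inl_inr, e.2]
    · simp [BipOn, bigRestrict]

theorem card_connectedComponent_bigRestrict (hE' : E' ⊆ H.E) :
    Nat.card (H.bigRestrict E').ConnectedComponent + #(E'.biUnion H.incid) + #E' =
      H.compCount E' + #H.V + #H.E := by
  have hiso : ∀ x ∉ Set.range (H.bipOnEmbedding hE'), ∀ y, ¬(H.bigRestrict E').Adj x y := by
    rintro (v | e) hx (w | f) hadj <;> apply hx
    · simp [bigRestrict] at hadj
    · obtain ⟨hf, hv⟩ := (H.bigRestrict_adj_inl_inr E').mp hadj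
      exact ⟨.inl ⟨v, mem_biUnion.mpr ⟨f, hf, hv⟩⟩, rfl⟩
    all_goals exact ⟨.inr ⟨e, ((H.bigRestrict_adj_inr E').mp hadj).1⟩, rfl⟩
  have := card_connectedComponent_add_card_of_embedding _ hiso
  simp only [Nat.card_sum, Nat.card_eq_finsetCard, compCount] at this ⊢
  omega

theorem sum_eq_mu_iff_isSpanningForest {Γ : SimpleGraph (↥H.V ⊕ ↥H.E)} {f : β → ℕ}
    (hΓ : H.Realizes Γ f) (hE' : E' ⊆ H.E) :
    (∑ e ∈ E', (f e : ℤ)) = H.mu E' ↔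
      IsSpanningForest (H.bigRestrict E') (Γ ⊓ H.bigRestrict E') := by
  rw [isSpanningForest_iff_card inf_le_right (hΓ.1.2.isAcyclic.anti inf_le_left),
    H.card_edgeSet_inf_bigRestrict E' hΓ hE', Nat.card_sum, Nat.card_eq_finsetCard,
    Nat.card_eq_finsetCard, mu, sum_add_distrib, sum_const, smul_eq_mul, mul_one,
    ← Nat.cast_sum]
  have := H.card_connectedComponent_bigRestrict hE'
  omega

end

end Hypergraph'

theorem forest_exchange_general (H : Hypergraph' α β)
    (Γ : SimpleGraph (↥H.V ⊕ ↥H.E)) (f : β → ℕ) (hreal : H.Realizes Γ f)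
    (E' : Finset β) (hE'sub : E' ⊆ H.E) :
    ((∑ e ∈ E', (f e : ℤ)) = H.mu E' ↔
      IsSpanningForest (H.bigRestrict E') (Γ ⊓ H.bigRestrict E')) ∧
    (∀ F : SimpleGraph (↥H.V ⊕ ↥H.E),
      (∑ e ∈ E', (f e : ℤ)) = H.mu E' →
      IsSpanningForest (H.bigRestrict E') F →
      ∃ g : β → ℕ, H.Realizes ((Γ \ H.bigRestrict E') ⊔ F) g ∧
        ∀ e ∈ H.E, e ∉ E' → g e = f e) := by
  have hforest := H.sum_eq_mu_iff_isSpanningForest hreal hE'sub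
  obtain ⟨⟨hΓle, hΓtree⟩, -, hdeg⟩ := hreal
  refine ⟨hforest, fun F hsum hF => ⟨_, H.realizes_hypertreeOf
    ⟨sup_le (sdiff_le.trans hΓle) (hF.1.trans (H.bigRestrict_le_bip E')),
      hΓtree.sdiff_sup_of_isSpanningForest (hforest.mp hsum) hF⟩, fun e he he' => ?_⟩⟩
  rw [Hypergraph'.hypertreeOf, dif_pos he, H.degr_sdiff_bigRestrict_sup E' hF.1 (e := ⟨e, he⟩) he',
    hdeg ⟨e, he⟩]
  rfl

/-- forest exchange lemma. -/
theorem forest_exchange (H : Hypergraph' α β) (hconn : H.Bip.Connected)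
    (Γ : SimpleGraph (↥H.V ⊕ ↥H.E)) (f : β → ℕ) (hreal : H.Realizes Γ f)
    (E' : Finset β) (hE'sub : E' ⊆ H.E) (hE'ne : E'.Nonempty) :
    ((∑ e ∈ E', (f e : ℤ)) = H.mu E' ↔
      IsSpanningForest (H.bigRestrict E') (Γ ⊓ H.bigRestrict E')) ∧
    (∀ F : SimpleGraph (↥H.V ⊕ ↥H.E),
      (∑ e ∈ E', (f e : ℤ)) = H.mu E' →
      IsSpanningForest (H.bigRestrict E') F →
      ∃ g : β → ℕ, H.Realizes ((Γ \ H.bigRestrict E') ⊔ F) g ∧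
        ∀ e ∈ H.E, e ∉ E' → g e = f e) :=
  forest_exchange_general H Γ f hreal E' hE'sub
end
end

section
/- Let H = (V, E) be a hypergraph with Bip H connected and with its hyperedges linearly ordered, and let g be the greedy hypertree of this order. If f : E → ℕ is a hypertree and e ∈ E is a hyperedge with f(e) > g(e), then there exists a hyperedge x < e such that f is such that a transfer of valence is possible from e to x. -/
open SimpleGraph Finset
open scoped Classical

noncomputable section

variable {α β : Type} [DecidableEq α] [DecidableEq β]

/-- A hypergraph: a finite set `V` of vertices, a finite (index) set `E` of hyperedges,
where the hyperedge indexed by `e ∈ E` is the nonempty set `incid e ⊆ V` of its vertices.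
(Indexing hyperedges by a type allows multiset multiplicities, as in the paper.) -/
structure HGraph (α β : Type) where
  V : Finset α
  E : Finset β
  incid : β → Finset α
  incid_sub : ∀ e ∈ E, incid e ⊆ V
  incid_nonempty : ∀ e ∈ E, (incid e).Nonempty

namespace HGraph

variable (H : HGraph α β)

/-- The bipartite graph associated to a hypergraph: color classes `V` and `E`,
with `v` joined to `e` iff `v ∈ incid e`. -/
def Bip : SimpleGraph (↥H.V ⊕ ↥H.E) :=
  SimpleGraph.fromRel (fun x y =>
    ∃ (v : ↥H.V) (e : ↥H.E), x = Sum.inl v ∧ y = Sum.inr e ∧ (v : α) ∈ H.incid (e : β))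

/-- A spanning tree of the associated bipartite graph. -/
def IsSpanningTree (T : SimpleGraph (↥H.V ⊕ ↥H.E)) : Prop :=
  T ≤ H.Bip ∧ T.IsTree

/-- `T` is a spanning tree of `Bip H` realizing the vector `f` (a function on the
hyperedges, encoded as a function on `β` vanishing off `E`): `T` has degree
`f e + 1` at each hyperedge `e`. -/
def Realizes (T : SimpleGraph (↥H.V ⊕ ↥H.E)) (f : β → ℕ) : Prop :=
  H.IsSpanningTree T ∧ (∀ e, e ∉ H.E → f e = 0) ∧
    ∀ e : ↥H.E, degr T (Sum.inr e) = f (e : β) + 1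

/-- A hypertree is a vector realized by some spanning tree of `Bip H`. -/
def IsHypertree (f : β → ℕ) : Prop := ∃ T, H.Realizes T f

/-- The bipartite graph `Bip H |_{E'}` induced by a subset `E'` of hyperedges:
color classes `∪E'` and `E'`. -/
def BipOn (E' : Finset β) : SimpleGraph (↥(E'.biUnion H.incid) ⊕ ↥E') :=
  SimpleGraph.fromRel (fun x y =>
    ∃ (v : ↥(E'.biUnion H.incid)) (e : ↥E'),
      x = Sum.inl v ∧ y = Sum.inr e ∧ (v : α) ∈ H.incid (e : β))

/-- `c(E')`: the number of connected components of `Bip H |_{E'}`. -/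
def compCount (E' : Finset β) : ℕ := Nat.card (H.BipOn E').ConnectedComponent

/-- `μ(E') = |∪E'| − c(E')` (and `μ(∅) = 0`). -/
def mu (E' : Finset β) : ℤ :=
  ((E'.biUnion H.incid).card : ℤ) - (H.compCount E' : ℤ)

/-- `f` is such that a transfer of valence is possible from `a` to `b`. -/
def TransferPossible (f : β → ℕ) (a b : β) : Prop :=
  0 < f a ∧ H.IsHypertree (transferFun f a b)

/-- `e` is internally active w.r.t. the hypertree `f` and the order `o`. -/
def InternallyActive (o : LinearOrder β) (f : β → ℕ) (e : β) : Prop :=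
  ∀ x ∈ H.E, o.lt x e → ¬ H.TransferPossible f e x

/-- `e` is externally active w.r.t. the hypertree `f` and the order `o`. -/
def ExternallyActive (o : LinearOrder β) (f : β → ℕ) (e : β) : Prop :=
  ∀ x ∈ H.E, o.lt x e → ¬ H.TransferPossible f x e

/-- `ῑ(f)`: the number of internally inactive hyperedges w.r.t. `f`. -/
def intInact (o : LinearOrder β) (f : β → ℕ) : ℕ :=
  (H.E.filter (fun e => ¬ H.InternallyActive o f e)).card

/-- `ε̄(f)`: the number of externally inactive hyperedges w.r.t. `f`. -/
def extInact (o : LinearOrder β) (f : β → ℕ) : ℕ :=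
  (H.E.filter (fun e => ¬ H.ExternallyActive o f e)).card

end HGraph

namespace HGraph

/-- The set `{x ∈ E | x ≤ e}` of hyperedges up to `e` in the order `o`. -/
def downSetLe (H : HGraph α β) (o : LinearOrder β) (e : β) : Finset β :=
  H.E.filter (fun x => o.le x e)

/-- The set `{x ∈ E | x < e}` of hyperedges strictly below `e` in the order `o`. -/
def downSetLt (H : HGraph α β) (o : LinearOrder β) (e : β) : Finset β :=
  H.E.filter (fun x => o.lt x e)

/-- The nullity-jump function of the order `o`: `nj(e_k) = n(G_k) − n(G_{k−1})`. -/
def nj (H : HGraph α β) (o : LinearOrder β) (e : β) : ℕ :=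
  nullity (H.BipOn (H.downSetLe o e)) - nullity (H.BipOn (H.downSetLt o e))

/-- The greedy vector of the order `o`: `g(e) = |e| − 1 − nj(e)`. -/
def greedy (H : HGraph α β) (o : LinearOrder β) : β → ℕ :=
  fun e => if e ∈ H.E then (H.incid e).card - 1 - H.nj o e else 0

end HGraph

/-!
Take a spanning tree `T` of `Bip H` realizing `f` and suppose no transfer from `e` to a smaller
hyperedge is possible. Then for every tree edge `ue`, each smaller hyperedge `b` lies, together
with all its vertices, on one side of the cut `T - ue`: otherwise replacing `ue` by an edge of
`b` crossing the cut realizes the transfer from `e` to `b`. Hence every component of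
`G = Bip H |_{x < e}` lies on one side of each such cut, so the `f(e) + 1` tree neighbours of `e`
are either vertices of `e` new to `G` or lie in pairwise distinct components of `G`:
`f(e) + 1 ≤ d + r`, where `d` counts the new vertices and `r` the components of `G` meeting `e`.
Adding `e` to `G` adds `|e|` edges and `d + 1` vertices and merges those `r` components with `e`,
so `nj(e) ≤ |e| - d - r`, i.e. `g(e) ≥ d + r - 1 ≥ f(e)`.
-/

namespace SimpleGraph

variable {V V' : Type*} {G : SimpleGraph V}

theorem Reachable.lift {G' : SimpleGraph V'} (φ : V → V')
    (h : ∀ a b, G.Adj a b → G'.Reachable (φ a) (φ b)) {u v : V} (huv : G.Reachable u v) :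
    G'.Reachable (φ u) (φ v) := by
  rw [reachable_iff_reflTransGen] at huv ⊢
  exact Relation.ReflTransGen.lift' φ
    (fun a b hab => (reachable_iff_reflTransGen _ _).1 (h a b hab)) u v huv

theorem Preconnected.reachable_deleteEdges_or (hG : G.Preconnected) (u v z : V) :
    (G.deleteEdges {s(u, v)}).Reachable z u ∨ (G.deleteEdges {s(u, v)}).Reachable z v := by
  obtain ⟨p⟩ := hG z u
  suffices ∀ {a b} (p : G.Walk a b), (b = u) →
      (G.deleteEdges {s(u, v)}).Reachable a u ∨ (G.deleteEdges {s(u, v)}).Reachable a v from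
    this p rfl
  intro a b p hb
  induction p with
  | nil => exact .inl (hb ▸ .rfl)
  | @cons a c _ hac _ ih =>
    by_cases hedge : s(a, c) = s(u, v)
    · rcases Sym2.eq_iff.1 hedge with ⟨rfl, -⟩ | ⟨rfl, -⟩
      exacts [.inl .rfl, .inr .rfl]
    · have : (G.deleteEdges {s(u, v)}).Adj a c := by simpa [hac] using hedge
      exact (ih hb).imp this.reachable.trans this.reachable.trans

theorem IsTree.deleteEdges_sup_edge {T : SimpleGraph V} (hT : T.IsTree) {u v x y : V}
    (huv : T.Adj u v) (hxy : ¬(T.deleteEdges {s(u, v)}).Reachable x y) :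
    (T.deleteEdges {s(u, v)} ⊔ edge x y).IsTree := by
  set D := T.deleteEdges {s(u, v)}
  have hD : D ≤ D ⊔ edge x y := le_sup_left
  have hne : x ≠ y := by rintro rfl; exact hxy .rfl
  have hxy' : (D ⊔ edge x y).Adj x y := Or.inr (by simp [edge_adj, hne])
  have hside := hT.connected.preconnected.reachable_deleteEdges_or u v
  have huv' : (D ⊔ edge x y).Reachable u v := by
    rcases hside x with hx | hx <;> rcases hside y with hy | hy
    · exact absurd (hx.trans hy.symm) hxy
    · exact (hx.mono hD).symm.trans (hxy'.reachable.trans (hy.mono hD))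
    · exact (hy.mono hD).symm.trans (hxy'.symm.reachable.trans (hx.mono hD))
    · exact absurd (hx.trans hy.symm) hxy
  refine ⟨@Connected.mk _ _ (fun a b => ?_) ⟨u⟩,
    (hT.isAcyclic.anti (deleteEdges_le _)).sup_edge_of_not_reachable hxy⟩
  refine Reachable.lift id (fun a b hab => ?_) (hT.connected.preconnected a b)
  by_cases hedge : s(a, b) = s(u, v)
  · rcases Sym2.eq_iff.1 hedge with ⟨rfl, rfl⟩ | ⟨rfl, rfl⟩
    exacts [huv', huv'.symm]
  · exact (show D.Adj a b by simpa [D, hab] using hedge).reachable.mono hD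

theorem IsAcyclic.eq_of_reachable_deleteEdges (hG : G.IsAcyclic) {a b c : V}
    (hac : G.Adj a c) (hbc : G.Adj b c) (hab : (G.deleteEdges {s(a, c)}).Reachable a b) :
    a = b := by
  by_contra hne
  have hbc' : (G.deleteEdges {s(a, c)}).Adj b c := by
    simp [hbc, Ne.symm hne, hbc.ne]
  exact isAcyclic_iff_forall_adj_isBridge.1 hG hac (hab.trans hbc'.reachable)

section

variable {u v x y : V}

theorem neighborSet_deleteEdges_sup_edge_deleted (hvx : v ≠ x) (hvy : v ≠ y) :
    (G.deleteEdges {s(u, v)} ⊔ edge x y).neighborSet v = G.neighborSet v \ {u} := by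
  ext z
  simp only [mem_neighborSet, sup_adj, deleteEdges_adj, edge_adj, Set.mem_sdiff,
    Set.mem_singleton_iff, Sym2.eq_iff]
  grind [Adj.ne]

theorem neighborSet_deleteEdges_sup_edge_added (hyu : y ≠ u) (hyv : y ≠ v) (hxy : x ≠ y) :
    (G.deleteEdges {s(u, v)} ⊔ edge x y).neighborSet y = insert x (G.neighborSet y) := by
  ext z
  simp only [mem_neighborSet, sup_adj, deleteEdges_adj, edge_adj, Set.mem_insert_iff,
    Set.mem_singleton_iff, Sym2.eq_iff]
  grind [Adj.ne]

theorem neighborSet_deleteEdges_sup_edge_of_ne {p : V} (hpu : p ≠ u) (hpv : p ≠ v)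
    (hpx : p ≠ x) (hpy : p ≠ y) :
    (G.deleteEdges {s(u, v)} ⊔ edge x y).neighborSet p = G.neighborSet p := by
  ext z
  simp only [mem_neighborSet, sup_adj, deleteEdges_adj, edge_adj, Set.mem_singleton_iff,
    Sym2.eq_iff]
  grind [Adj.ne]

end

end SimpleGraph

namespace HGraph

open SimpleGraph

variable {H : HGraph α β} {T : SimpleGraph (↥H.V ⊕ ↥H.E)} {f : β → ℕ}

omit [DecidableEq α] [DecidableEq β] in
theorem bip_adj_inl_inr {v : ↥H.V} {b : ↥H.E} :
    H.Bip.Adj (.inl v) (.inr b) ↔ (v : α) ∈ H.incid b := by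
  simp [Bip]

omit [DecidableEq α] [DecidableEq β] in
theorem exists_eq_inl_of_bip_adj_inr {z : ↥H.V ⊕ ↥H.E} {b : ↥H.E}
    (h : H.Bip.Adj z (.inr b)) :
    ∃ v : ↥H.V, z = .inl v ∧ (v : α) ∈ H.incid b := by
  rcases z with v | c
  · exact ⟨v, rfl, bip_adj_inl_inr.1 h⟩
  · simp [Bip] at h

omit [DecidableEq α] in
theorem Realizes.isHypertree_transferFun (hT : H.Realizes T f) {u w : ↥H.V} {a b : ↥H.E}
    (hua : T.Adj (.inl u) (.inr a)) (hab : a ≠ b) (hwb : (w : α) ∈ H.incid b) (hfa : 0 < f a)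
    (hnr : ¬(T.deleteEdges {s(.inl u, .inr a)}).Reachable (.inl w) (.inr b)) :
    H.IsHypertree (transferFun f a b) := by
  obtain ⟨⟨hTB, hTtree⟩, hzero, hdeg⟩ := hT
  have hnadj : ¬T.Adj (.inl w) (.inr b) := fun h => hnr (by
    refine Adj.reachable ?_
    simpa [h] using fun _ => hab.symm)
  refine ⟨T.deleteEdges {s(.inl u, .inr a)} ⊔ edge (.inl w) (.inr b),
    ⟨sup_le ((deleteEdges_le _).trans hTB) ((edge_le_iff _).2 (.inr (bip_adj_inl_inr.2 hwb))),
      hTtree.deleteEdges_sup_edge hua hnr⟩, fun c hc => ?_, fun c => ?_⟩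
  · have hca : c ≠ a := fun h => hc (h ▸ a.2)
    have hcb : c ≠ b := fun h => hc (h ▸ b.2)
    simp [transferFun, hca, hcb, hzero c hc]
  · unfold degr
    by_cases hca : c = a
    · subst hca
      rw [neighborSet_deleteEdges_sup_edge_deleted (by simp) (by simpa using hab),
        Set.ncard_sdiff_singleton_of_mem (s := T.neighborSet _) hua.symm, ← degr, hdeg]
      simp [transferFun]
      omega
    by_cases hcb : c = b
    · subst hcb
      rw [neighborSet_deleteEdges_sup_edge_added (by simp) (by simpa using Ne.symm hab)
        (by simp), Set.ncard_insert_of_notMem (fun h => hnadj h.symm), ← degr, hdeg]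
      simp [transferFun, Subtype.coe_ne_coe.2 (Ne.symm hab)]
    · rw [neighborSet_deleteEdges_sup_edge_of_ne (by simp) (by simpa using hca) (by simp)
        (by simpa using hcb), ← degr, hdeg]
      simp [transferFun, Subtype.coe_ne_coe.2 hca, Subtype.coe_ne_coe.2 hcb]

omit [DecidableEq α] in
theorem Realizes.reachable_of_not_transferPossible (hT : H.Realizes T f) {u w : ↥H.V}
    {a b : ↥H.E} (hua : T.Adj (.inl u) (.inr a)) (hab : a ≠ b) (hfa : 0 < f a)
    (hno : ¬H.TransferPossible f a b) (hwb : (w : α) ∈ H.incid b) :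
    (T.deleteEdges {s(.inl u, .inr a)}).Reachable (.inl w) (.inr b) :=
  by_contra fun hnr => hno ⟨hfa, hT.isHypertree_transferFun hua hab hwb hfa hnr⟩

variable {E' : Finset β}

omit [DecidableEq β] in
theorem bipOn_adj_inl_inr {v : ↥(E'.biUnion H.incid)} {b : ↥E'} :
    (H.BipOn E').Adj (.inl v) (.inr b) ↔ (v : α) ∈ H.incid b := by
  refine ⟨?_, fun h => ⟨by simp, .inl ⟨v, b, rfl, rfl, h⟩⟩⟩
  rintro ⟨-, ⟨v', b', hv, hb, h⟩ | ⟨_, _, h, -, -⟩⟩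
  · cases hv; cases hb; exact h
  · cases h

omit [DecidableEq β] in
theorem biUnion_incid_subset (hE' : E' ⊆ H.E) : E'.biUnion H.incid ⊆ H.V :=
  Finset.biUnion_subset.2 fun b hb => H.incid_sub b (hE' hb)

def bipOnToBip (hE' : E' ⊆ H.E) : ↥(E'.biUnion H.incid) ⊕ ↥E' → ↥H.V ⊕ ↥H.E :=
  Sum.map (fun v => ⟨v, biUnion_incid_subset hE' v.2⟩) (fun b => ⟨b, hE' b.2⟩)

omit [DecidableEq β] in
theorem reachable_bipOnToBip {G : SimpleGraph (↥H.V ⊕ ↥H.E)} (hE' : E' ⊆ H.E)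
    (hstar : ∀ (v : ↥(E'.biUnion H.incid)) (b : ↥E'), (v : α) ∈ H.incid b →
      G.Reachable (bipOnToBip hE' (.inl v)) (bipOnToBip hE' (.inr b)))
    {x y : ↥(E'.biUnion H.incid) ⊕ ↥E'} (h : (H.BipOn E').Reachable x y) :
    G.Reachable (bipOnToBip hE' x) (bipOnToBip hE' y) := by
  refine h.lift _ fun x y hxy => ?_
  rcases x with v | b <;> rcases y with w | c
  · simp [BipOn] at hxy
  · exact hstar v c (bipOn_adj_inl_inr.1 hxy)
  · exact (hstar w b (bipOn_adj_inl_inr.1 hxy.symm)).symm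
  · simp [BipOn] at hxy

def bipOnHom {E₁ E₂ : Finset β} (h : E₁ ⊆ E₂) : H.BipOn E₁ →g H.BipOn E₂ where
  toFun := Sum.map (fun v => ⟨v, Finset.biUnion_subset_biUnion_of_subset_left _ h v.2⟩)
    (fun b => ⟨b, h b.2⟩)
  map_rel' {x y} hxy := by
    rcases x with v | b <;> rcases y with w | c
    · simp [BipOn] at hxy
    · have hvc := bipOn_adj_inl_inr.1 hxy
      exact bipOn_adj_inl_inr.2 hvc
    · have hwb := bipOn_adj_inl_inr.1 hxy.symm
      exact ((bipOn_adj_inl_inr (E' := E₂)).2 hwb).symm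
    · simp [BipOn] at hxy

omit [DecidableEq β] in
theorem exists_connectedComponentMk_inr (C : (H.BipOn E').ConnectedComponent) :
    ∃ b : ↥E', (H.BipOn E').connectedComponentMk (.inr b) = C := by
  induction C using ConnectedComponent.ind with
  | h z =>
    rcases z with v | b
    · obtain ⟨b, hb, hvb⟩ := Finset.mem_biUnion.1 v.2
      exact ⟨⟨b, hb⟩, (ConnectedComponent.connectedComponentMk_eq_of_adj
        (bipOn_adj_inl_inr.2 hvb)).symm⟩
    · exact ⟨b, rfl⟩

def componentsMeeting (E' : Finset β) (s : Finset α) : Finset (H.BipOn E').ConnectedComponent :=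
  (s ∩ E'.biUnion H.incid).attach.image fun v =>
    (H.BipOn E').connectedComponentMk (.inl ⟨v.1, (Finset.mem_inter.1 v.2).2⟩)

omit [DecidableEq β] in
theorem componentsMeeting_mono {s t : Finset α} (hst : s ⊆ t) :
    H.componentsMeeting E' s ⊆ H.componentsMeeting E' t := by
  intro C hC
  obtain ⟨v, -, rfl⟩ := Finset.mem_image.1 hC
  have hv := Finset.mem_inter.1 v.2
  exact Finset.mem_image.2
    ⟨⟨v, Finset.mem_inter.2 ⟨hst hv.1, hv.2⟩⟩, Finset.mem_attach _ _, rfl⟩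

omit [DecidableEq β] in
theorem card_componentsMeeting_le (s : Finset α) :
    #(H.componentsMeeting E' s) ≤ #(s ∩ E'.biUnion H.incid) :=
  Finset.card_image_le.trans (Finset.card_attach).le

omit [DecidableEq β] in
theorem card_componentsMeeting_eq {s : Finset α}
    (hinj : ∀ v w : ↥(E'.biUnion H.incid), (v : α) ∈ s → (w : α) ∈ s →
      (H.BipOn E').Reachable (.inl v) (.inl w) → v = w) :
    #(H.componentsMeeting E' s) = #(s ∩ E'.biUnion H.incid) := by
  refine (Finset.card_image_of_injective _ fun v w hvw => ?_).trans Finset.card_attach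
  have hv := Finset.mem_inter.1 v.2
  have hw := Finset.mem_inter.1 w.2
  have hvw' := hinj ⟨v, hv.2⟩ ⟨w, hw.2⟩ hv.1 hw.1 (ConnectedComponent.eq.1 hvw)
  exact Subtype.ext (congrArg (Subtype.val : ↥(E'.biUnion H.incid) → α) hvw')

theorem card_connectedComponent_bipOn_insert_add_le (e : β) (E' : Finset β) :
    Nat.card (H.BipOn (insert e E')).ConnectedComponent + #(H.componentsMeeting E' (H.incid e)) ≤
      Nat.card (H.BipOn E').ConnectedComponent + 1 := by
  set ι := ConnectedComponent.map (H.bipOnHom (Finset.subset_insert e E'))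
  set c₀ :=
    (H.BipOn (insert e E')).connectedComponentMk (.inr ⟨e, Finset.mem_insert_self e E'⟩)
  have hmeet : ∀ C ∈ H.componentsMeeting E' (H.incid e), ι C = c₀ := by
    intro C hC
    obtain ⟨v, -, rfl⟩ := Finset.mem_image.1 hC
    exact ConnectedComponent.connectedComponentMk_eq_of_adj
      (bipOn_adj_inl_inr.2 (Finset.mem_inter.1 v.2).1)
  have hcover : Finset.univ ⊆ insert c₀ ((H.componentsMeeting E' (H.incid e))ᶜ.image ι) := by
    intro C _
    obtain ⟨⟨b, hb⟩, rfl⟩ := H.exists_connectedComponentMk_inr C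
    rcases Finset.mem_insert.1 hb with rfl | hb
    · exact Finset.mem_insert_self _ _
    by_cases hC : (H.BipOn E').connectedComponentMk (.inr ⟨b, hb⟩) ∈
        H.componentsMeeting E' (H.incid e)
    · exact Finset.mem_insert.2 (.inl (hmeet _ hC))
    · exact Finset.mem_insert_of_mem (Finset.mem_image.2 ⟨_, Finset.mem_compl.2 hC, rfl⟩)
  have hle := (Finset.card_le_card hcover).trans (Finset.card_insert_le _ _)
  have himage := Finset.card_image_le (f := ι) (s := (H.componentsMeeting E' (H.incid e))ᶜ)
  have hmeet_le := Finset.card_le_univ (H.componentsMeeting E' (H.incid e))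
  rw [Finset.card_univ] at hle
  rw [Finset.card_compl] at himage
  rw [Nat.card_eq_fintype_card, Nat.card_eq_fintype_card]
  omega

omit [DecidableEq β] in
theorem ncard_edgeSet_bipOn (E' : Finset β) :
    (H.BipOn E').edgeSet.ncard = ∑ b ∈ E', #(H.incid b) := by
  rw [← Finset.card_sigma, ← Set.ncard_coe_finset]
  symm
  refine Set.ncard_congr (fun p hp => s(.inl ⟨p.2, Finset.mem_biUnion.2 ⟨p.1,
      (Finset.mem_sigma.1 hp).1, (Finset.mem_sigma.1 hp).2⟩⟩,
      .inr ⟨p.1, (Finset.mem_sigma.1 hp).1⟩))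
    (fun p hp => bipOn_adj_inl_inr.2 (Finset.mem_sigma.1 hp).2) ?_ ?_
  · rintro ⟨b, v⟩ ⟨c, w⟩ _ _ h
    simp only [Sym2.eq_iff, Sum.inl.injEq, Sum.inr.injEq, Subtype.mk.injEq, reduceCtorEq,
      and_false, or_false] at h
    obtain ⟨rfl, rfl⟩ := h
    rfl
  · intro q hq
    induction q using Sym2.ind with
    | h x y =>
    rcases x with v | b <;> rcases y with w | c
    · simp [BipOn] at hq
    · exact ⟨⟨c, v⟩, Finset.mem_sigma.2 ⟨c.2, bipOn_adj_inl_inr.1 hq⟩, rfl⟩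
    · have hbw : (H.BipOn E').Adj (.inr b) (.inl w) := hq
      exact
        ⟨⟨b, w⟩, Finset.mem_sigma.2 ⟨b.2, bipOn_adj_inl_inr.1 hbw.symm⟩, Sym2.eq_swap⟩
    · simp [BipOn] at hq

theorem card_biUnion_insert (e : β) (E' : Finset β) :
    #((insert e E').biUnion H.incid) =
      #(E'.biUnion H.incid) + #(H.incid e \ E'.biUnion H.incid) := by
  rw [Finset.biUnion_insert, ← Finset.card_sdiff_add_card, add_comm]

theorem nullity_bipOn_insert_sub_add_le {e : β} (he : e ∉ E') :
    nullity (H.BipOn (insert e E')) - nullity (H.BipOn E') + #(H.incid e \ E'.biUnion H.incid) +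
      #(H.componentsMeeting E' (H.incid e)) ≤ #(H.incid e) := by
  have hcomp := H.card_connectedComponent_bipOn_insert_add_le e E'
  have hmeet := H.card_componentsMeeting_le (E' := E') (H.incid e)
  have hsplit := Finset.card_sdiff_add_card_inter (H.incid e) (E'.biUnion H.incid)
  have hverts := H.card_biUnion_insert e E'
  simp only [nullity, ncard_edgeSet_bipOn, Finset.sum_insert he, Nat.card_sum,
    Nat.card_eq_finsetCard, Finset.card_insert_of_notMem he] at hcomp ⊢
  omega

omit [DecidableEq β] in
theorem degr_inr_eq_card_filter (hTB : T ≤ H.Bip) (a : ↥H.E) :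
    degr T (.inr a) =
      #((H.incid a).filter fun v => ∃ hv : v ∈ H.V, T.Adj (.inl ⟨v, hv⟩) (.inr a)) := by
  rw [degr, ← Set.ncard_coe_finset]
  symm
  refine Set.ncard_congr (fun v hv => .inl ⟨v, H.incid_sub a a.2 (Finset.mem_filter.1 hv).1⟩)
    (fun v hv => ?_) (fun v w _ _ h => by simpa using h) (fun z hz => ?_)
  · obtain ⟨-, _, h⟩ := Finset.mem_filter.1 hv
    exact h.symm
  · obtain ⟨u, rfl, hu⟩ := exists_eq_inl_of_bip_adj_inr (hTB (show T.Adj _ _ from hz).symm)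
    exact ⟨u, Finset.mem_filter.2 ⟨hu, u.2, (show T.Adj _ _ from hz).symm⟩, rfl⟩

theorem Realizes.eq_of_reachable_bipOn (hT : H.Realizes T f) {a : ↥H.E} (hE' : E' ⊆ H.E)
    (haE' : (a : β) ∉ E') (hfa : 0 < f a) (hno : ∀ b ∈ E', ¬H.TransferPossible f a b)
    {v w : ↥(E'.biUnion H.incid)}
    (hv : T.Adj (.inl ⟨v, biUnion_incid_subset hE' v.2⟩) (.inr a))
    (hw : T.Adj (.inl ⟨w, biUnion_incid_subset hE' w.2⟩) (.inr a))
    (hvw : (H.BipOn E').Reachable (.inl v) (.inl w)) : v = w := by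
  have hstar := reachable_bipOnToBip hE' (fun u b hub =>
    hT.reachable_of_not_transferPossible hv (a := a) (b := ⟨b, hE' b.2⟩)
      (fun h => haE' (h ▸ b.2)) hfa (hno b b.2) hub) hvw
  have hinl := hT.1.2.isAcyclic.eq_of_reachable_deleteEdges hv hw hstar
  exact Subtype.ext (by simpa using hinl)

theorem Realizes.succ_le_card_sdiff_add_card_componentsMeeting (hT : H.Realizes T f)
    {a : ↥H.E} (hE' : E' ⊆ H.E) (haE' : (a : β) ∉ E') (hfa : 0 < f a)
    (hno : ∀ b ∈ E', ¬H.TransferPossible f a b) :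
    f a + 1 ≤ #(H.incid a \ E'.biUnion H.incid) + #(H.componentsMeeting E' (H.incid a)) := by
  set N := (H.incid a).filter fun v => ∃ hv : v ∈ H.V, T.Adj (.inl ⟨v, hv⟩) (.inr a)
  have hN : f a + 1 = #N := by rw [← hT.2.2 a, degr_inr_eq_card_filter hT.1.1]
  have hnew : #(N \ E'.biUnion H.incid) ≤ #(H.incid a \ E'.biUnion H.incid) :=
    Finset.card_le_card (Finset.sdiff_subset_sdiff (Finset.filter_subset _ _) le_rfl)
  have hold : #(N ∩ E'.biUnion H.incid) = #(H.componentsMeeting E' N) := by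
    refine (H.card_componentsMeeting_eq fun v w hvN hwN hvw => ?_).symm
    obtain ⟨-, _, hv⟩ := Finset.mem_filter.1 hvN
    obtain ⟨-, _, hw⟩ := Finset.mem_filter.1 hwN
    exact hT.eq_of_reachable_bipOn hE' haE' hfa hno hv hw hvw
  have hmono : #(H.componentsMeeting E' N) ≤ #(H.componentsMeeting E' (H.incid a)) :=
    Finset.card_le_card (H.componentsMeeting_mono (Finset.filter_subset _ _))
  have hsplit := Finset.card_sdiff_add_card_inter N (E'.biUnion H.incid)
  omega

omit [DecidableEq α] in
theorem downSetLe_eq_insert (o : LinearOrder β) {e : β} (he : e ∈ H.E) :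
    H.downSetLe o e = insert e (H.downSetLt o e) := by
  let _ := o
  ext x
  simp only [downSetLe, downSetLt, Finset.mem_insert, Finset.mem_filter, le_iff_lt_or_eq]
  grind

end HGraph

theorem transfer_below_greedy_general (H : HGraph α β)
    (o : LinearOrder β) (f : β → ℕ) (hf : H.IsHypertree f)
    (e : β) (he : e ∈ H.E) (hgt : H.greedy o e < f e) :
    ∃ x ∈ H.E, o.lt x e ∧ H.TransferPossible f e x := by
  by_contra! hno
  obtain ⟨T, hT⟩ := hf
  have heLt : e ∉ H.downSetLt o e := fun h => (Finset.mem_filter.1 h).2.false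
  have hcount : f e + 1 ≤ #(H.incid e \ (H.downSetLt o e).biUnion H.incid) +
      #(H.componentsMeeting (H.downSetLt o e) (H.incid e)) :=
    hT.succ_le_card_sdiff_add_card_componentsMeeting (a := ⟨e, he⟩) (Finset.filter_subset _ _)
      heLt ((Nat.zero_le _).trans_lt hgt)
      fun b hb => hno b (Finset.mem_filter.1 hb).1 (Finset.mem_filter.1 hb).2
  have hjump := H.nullity_bipOn_insert_sub_add_le heLt
  rw [HGraph.greedy, if_pos he, HGraph.nj, H.downSetLe_eq_insert o he] at hgt
  omega

/-- if a hypertree exceeds the greedy hypertree at `e`, then a transfer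
of valence is possible from `e` to some smaller hyperedge. -/
theorem transfer_below_greedy (H : HGraph α β) (hconn : H.Bip.Connected)
    (o : LinearOrder β) (f : β → ℕ) (hf : H.IsHypertree f)
    (e : β) (he : e ∈ H.E) (hgt : H.greedy o e < f e) :
    ∃ x ∈ H.E, o.lt x e ∧ H.TransferPossible f e x :=
  transfer_below_greedy_general H o f hf e he hgt
end
end
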